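/- arXiv:math/9903064 — 6 statements merged into one kernel-verified Lean document; each statement's English description precedes it below -/
import Mathlib

section
/- Let g ≥ 1 and let Π_g be the fundamental group of a closed orientable surface of genus g, that is, the presented group on generators a_1, b_1, …, a_g, b_g with the single relator (a_1 b_1 a_1⁻¹ b_1⁻¹)⋯(a_g b_g a_g⁻¹ b_g⁻¹). If there exists a surjective group homomorphism from Π_g onto a free group of finite rank r, then r ≤ g. -/
open scoped commutatorElement

/-- The single relator `(a₁b₁a₁⁻¹b₁⁻¹)⋯(a_g b_g a_g⁻¹ b_g⁻¹)` of the genus-`g` surface group,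
in the free group on generators `Sum.inl i = aᵢ` and `Sum.inr i = bᵢ`. -/
def surfaceRelator (g : ℕ) : FreeGroup (Fin g ⊕ Fin g) :=
  (List.ofFn fun i : Fin g =>
    ⁅FreeGroup.of (Sum.inl i : Fin g ⊕ Fin g), FreeGroup.of (Sum.inr i : Fin g ⊕ Fin g)⁆).prod

/-- The genus-`g` surface group `Π_g`, presented on `2g` generators with the single
relator `∏ᵢ [aᵢ, bᵢ]`. -/
def SurfaceGroup (g : ℕ) : Type :=
  PresentedGroup ({surfaceRelator g} : Set (FreeGroup (Fin g ⊕ Fin g)))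

instance (g : ℕ) : Group (SurfaceGroup g) := by
  unfold SurfaceGroup; infer_instance

/-!
Compose a surjection `Π_g → F_r` with the abelianisation `F_r → ℚ^r`; the images `uᵢ, vᵢ` of the
generators `aᵢ, bᵢ` span `ℚ^r`. Since `F_r` is free, any two linear forms `f, ψ` on `ℚ^r` lift `F_r`
into the Heisenberg group, where the commutator `[p, q]` is the central element
`p.x * q.y - q.x * p.y`; the surface relation then gives `∑ f(uᵢ) ψ(vᵢ) = ∑ f(vᵢ) ψ(uᵢ)`, that is
`∑ uᵢ ∧ vᵢ = 0`. For `f` vanishing on `U = span {uᵢ}` this says `∑ f(vᵢ) uᵢ = 0`, so `f ↦ (f(vᵢ))ᵢ`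
embeds the annihilator of `U`, of dimension `r - dim U`, into the relations among the `uᵢ`, of
dimension `g - dim U`.
-/

/-- `⟨x, y, z⟩` is the unitriangular matrix `[[1, x, z], [0, 1, y], [0, 0, 1]]`. -/
@[ext]
structure Heisenberg (R : Type*) where
  x : R
  y : R
  z : R

namespace Heisenberg

variable {R : Type*} [Ring R]

instance : Mul (Heisenberg R) := ⟨fun p q => ⟨p.x + q.x, p.y + q.y, p.z + q.z + p.x * q.y⟩⟩
instance : One (Heisenberg R) := ⟨⟨0, 0, 0⟩⟩
instance : Inv (Heisenberg R) := ⟨fun p => ⟨-p.x, -p.y, -p.z + p.x * p.y⟩⟩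

@[simp] lemma mul_x (p q : Heisenberg R) : (p * q).x = p.x + q.x := rfl
@[simp] lemma mul_y (p q : Heisenberg R) : (p * q).y = p.y + q.y := rfl
@[simp] lemma mul_z (p q : Heisenberg R) : (p * q).z = p.z + q.z + p.x * q.y := rfl
@[simp] lemma one_x : (1 : Heisenberg R).x = 0 := rfl
@[simp] lemma one_y : (1 : Heisenberg R).y = 0 := rfl
@[simp] lemma one_z : (1 : Heisenberg R).z = 0 := rfl
@[simp] lemma inv_x (p : Heisenberg R) : p⁻¹.x = -p.x := rfl
@[simp] lemma inv_y (p : Heisenberg R) : p⁻¹.y = -p.y := rfl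
@[simp] lemma inv_z (p : Heisenberg R) : p⁻¹.z = -p.z + p.x * p.y := rfl

instance : Group (Heisenberg R) where
  mul_assoc p q r := by ext <;> simp only [mul_x, mul_y, mul_z, mul_add, add_mul] <;> abel
  one_mul p := by ext <;> simp
  mul_one p := by ext <;> simp
  inv_mul_cancel p := by ext <;> simp

def xHom : Heisenberg R →* Multiplicative R where
  toFun p := .ofAdd p.x
  map_one' := rfl
  map_mul' _ _ := rfl

def yHom : Heisenberg R →* Multiplicative R where
  toFun p := .ofAdd p.y
  map_one' := rfl
  map_mul' _ _ := rfl

def center : Multiplicative R →* Heisenberg R where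
  toFun c := ⟨0, 0, c.toAdd⟩
  map_one' := rfl
  map_mul' a b := by ext <;> simp

lemma commutator_eq (p q : Heisenberg R) :
    ⁅p, q⁆ = center (.ofAdd (p.x * q.y - q.x * p.y)) := by
  ext <;> simp [commutatorElement_def, center]; noncomm_ring

lemma list_prod_ofFn_center {n : ℕ} (c : Fin n → R) :
    (List.ofFn fun i => center (.ofAdd (c i))).prod = center (.ofAdd (∑ i, c i)) := by
  rw [ofAdd_sum, ← List.prod_ofFn, map_list_prod, List.map_ofFn]
  rfl

lemma exists_lift_freeGroup {ι : Type*} (α β : FreeGroup ι →* Multiplicative R) :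
    ∃ θ : FreeGroup ι →* Heisenberg R, xHom.comp θ = α ∧ yHom.comp θ = β :=
  ⟨FreeGroup.lift fun j => ⟨(α (.of j)).toAdd, (β (.of j)).toAdd, 0⟩,
    FreeGroup.ext_hom _ _ fun _ => by simp [xHom], FreeGroup.ext_hom _ _ fun _ => by simp [yHom]⟩

end Heisenberg

namespace SurfaceGroup

variable {g : ℕ}

def a (i : Fin g) : SurfaceGroup g := PresentedGroup.of (Sum.inl i)

def b (i : Fin g) : SurfaceGroup g := PresentedGroup.of (Sum.inr i)

theorem prod_commutator_eq_one : (List.ofFn fun i => ⁅a i, b i⁆).prod = (1 : SurfaceGroup g) := by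
  have h := PresentedGroup.one_of_mem (Set.mem_singleton (surfaceRelator g))
  rw [surfaceRelator, map_list_prod, List.map_ofFn] at h
  simp only [Function.comp_def, map_commutatorElement] at h
  exact h

theorem sum_x_mul_y_sub_eq_zero {R : Type*} [Ring R] (θ : SurfaceGroup g →* Heisenberg R) :
    ∑ i, ((θ (a i)).x * (θ (b i)).y - (θ (b i)).x * (θ (a i)).y) = 0 := by
  have h := congrArg θ prod_commutator_eq_one
  simp only [map_list_prod, List.map_ofFn, Function.comp_def, map_commutatorElement,
    Heisenberg.commutator_eq, map_one, Heisenberg.list_prod_ofFn_center] at h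
  exact congrArg Heisenberg.z h

theorem sum_mul_eq_sum_mul_swap {R ι : Type*} [Ring R] (φ : SurfaceGroup g →* FreeGroup ι)
    (α β : FreeGroup ι →* Multiplicative R) :
    ∑ i, (α (φ (a i))).toAdd * (β (φ (b i))).toAdd =
      ∑ i, (α (φ (b i))).toAdd * (β (φ (a i))).toAdd := by
  obtain ⟨θ, rfl, rfl⟩ := Heisenberg.exists_lift_freeGroup α β
  rw [← sub_eq_zero, ← Finset.sum_sub_distrib]
  exact sum_x_mul_y_sub_eq_zero (θ.comp φ)

end SurfaceGroup

open Module Submodule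

theorem finrank_le_card_of_sum_mul_eq_sum_mul {K V ι : Type*} [Field K] [AddCommGroup V]
    [Module K V] [Fintype ι] (u v : ι → V) (hspan : span K (Set.range u ∪ Set.range v) = ⊤)
    (hcup : ∀ f ψ : Dual K V, ∑ i, f (u i) * ψ (v i) = ∑ i, f (v i) * ψ (u i)) :
    finrank K V ≤ Fintype.card ι := by
  have : FiniteDimensional K V :=
    ⟨hspan ▸ Submodule.fg_span ((Set.finite_range u).union (Set.finite_range v))⟩
  set S := Fintype.linearCombination K u
  set U := span K (Set.range u)
  have hfu : ∀ f ∈ U.dualAnnihilator, ∀ i, f (u i) = 0 := fun f hf i =>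
    (mem_dualAnnihilator f).1 hf _ (subset_span ⟨i, rfl⟩)
  have hrel : ∀ f ∈ U.dualAnnihilator, S (fun i => f (v i)) = 0 := by
    intro f hf
    rw [← Module.forall_dual_apply_eq_zero_iff K]
    intro ψ
    simpa [S, Fintype.linearCombination_apply, hfu f hf, mul_comm] using (hcup f ψ).symm
  let L : U.dualAnnihilator →ₗ[K] LinearMap.ker S :=
    LinearMap.codRestrict _
      ((LinearMap.pi fun i => Dual.eval K V (v i)) ∘ₗ U.dualAnnihilator.subtype) fun f => hrel f f.2
  have hL : Function.Injective L := by
    intro f f' hff'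
    refine Subtype.ext (LinearMap.ext_on hspan ?_)
    rintro _ (⟨i, rfl⟩ | ⟨i, rfl⟩)
    · rw [hfu f f.2 i, hfu f' f'.2 i]
    · exact congrFun (congrArg Subtype.val hff') i
  calc finrank K V = finrank K U + finrank K U.dualAnnihilator :=
        (Subspace.finrank_add_finrank_dualAnnihilator_eq U).symm
    _ ≤ finrank K (LinearMap.range S) + finrank K (LinearMap.ker S) := by
        rw [Fintype.range_linearCombination]
        exact add_le_add le_rfl (LinearMap.finrank_le_finrank_of_injective hL)
    _ = Fintype.card ι := by
        rw [LinearMap.finrank_range_add_finrank_ker, finrank_fintype_fun_eq_card]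

theorem surfaceGroup_surj_freeGroup_rank_le_general (g r : ℕ)
    (h : ∃ f : SurfaceGroup g →* FreeGroup (Fin r), Function.Surjective f) :
    r ≤ g := by
  obtain ⟨φ, hφ⟩ := h
  let π : FreeGroup (Fin r) →* Multiplicative (Fin r → ℚ) :=
    FreeGroup.lift fun j => .ofAdd (Pi.single j 1)
  let u i := (π (φ (SurfaceGroup.a i))).toAdd
  let v i := (π (φ (SurfaceGroup.b i))).toAdd
  have hspan : span ℚ (Set.range u ∪ Set.range v) = ⊤ := by
    have hmem : ∀ s, (π (φ s)).toAdd ∈ span ℚ (Set.range u ∪ Set.range v) :=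
      PresentedGroup.generated_by _ ((span ℚ _).toAddSubgroup.toSubgroup.comap (π.comp φ)) <| by
        rintro (i | i)
        exacts [subset_span (.inl ⟨i, rfl⟩), subset_span (.inr ⟨i, rfl⟩)]
    rw [eq_top_iff, ← (Pi.basisFun ℚ (Fin r)).span_eq, span_le]
    rintro _ ⟨j, rfl⟩
    obtain ⟨s, hs⟩ := hφ (.of j)
    simpa [hs, π] using hmem s
  have hcup (f ψ : Dual ℚ (Fin r → ℚ)) : ∑ i, f (u i) * ψ (v i) = ∑ i, f (v i) * ψ (u i) :=
    SurfaceGroup.sum_mul_eq_sum_mul_swap φ (f.toAddMonoidHom.toMultiplicative.comp π)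
      (ψ.toAddMonoidHom.toMultiplicative.comp π)
  simpa using finrank_le_card_of_sum_mul_eq_sum_mul u v hspan hcup

/-- If the genus-`g` surface group (`g ≥ 1`) surjects onto a free group of rank `r`,
then `r ≤ g`. -/
theorem surfaceGroup_surj_freeGroup_rank_le (g r : ℕ) (hg : 1 ≤ g)
    (h : ∃ f : SurfaceGroup g →* FreeGroup (Fin r), Function.Surjective f) :
    r ≤ g :=
  surfaceGroup_surj_freeGroup_rank_le_general g r h
end

section
/- Let G be a group such that every subgroup of infinite index in G is locally free and no subgroup of finite index in G is locally free. Then there exists a subgroup Γ ≤ G of infinite index such that every subgroup of G strictly containing Γ has finite index in G. -/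
/-!
Under the hypotheses a subgroup has infinite index exactly when it is locally free, so it suffices
to find a maximal locally free subgroup. Whether a subgroup is locally free depends only on its
finitely generated subgroups, and each of these lies in a single member of a chain whenever it lies
in the union of the chain; hence Zorn's lemma applies, starting from the trivial subgroup.
-/

/-- A group is locally free if every finitely generated subgroup of it is a free group. -/
def IsLocallyFree (G : Type*) [Group G] : Prop :=
  ∀ H : Subgroup G, H.FG → Nonempty (IsFreeGroup H)

theorem IsLocallyFree.of_subsingleton {G : Type*} [Group G] [Subsingleton G] :
    IsLocallyFree G := fun H _ =>
  have : Unique H := ⟨⟨1⟩, fun _ => Subsingleton.elim _ _⟩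
  ⟨.ofMulEquiv (G := FreeGroup Empty) MulEquiv.ofUnique⟩

namespace Subgroup

variable {G : Type*} [Group G]

theorem fg_subgroupOf_iff {H K : Subgroup G} (hKH : K ≤ H) : (K.subgroupOf H).FG ↔ K.FG := by
  let e := subgroupOfEquivOfLe hKH
  simp only [← Group.fg_iff_subgroup_fg]
  exact ⟨fun _ => Group.fg_of_surjective (f := (e : K.subgroupOf H →* K)) e.surjective,
    fun _ =>
      Group.fg_of_surjective (f := (e.symm : K →* K.subgroupOf H)) e.symm.surjective⟩

theorem isLocallyFree_iff {H : Subgroup G} :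
    IsLocallyFree H ↔ ∀ K ≤ H, K.FG → Nonempty (IsFreeGroup K) := by
  refine ⟨fun hH K hKH hK => ?_, fun h L hL => ?_⟩
  · obtain ⟨_⟩ := hH _ ((fg_subgroupOf_iff hKH).2 hK)
    exact ⟨.ofMulEquiv (subgroupOfEquivOfLe hKH)⟩
  · obtain ⟨K, hKH, rfl⟩ : ∃ K ≤ H, K.subgroupOf H = L :=
      ⟨_, map_subtype_le L,
        by rw [← comap_subtype, comap_map_eq_self_of_injective H.subtype_injective]⟩
    obtain ⟨_⟩ := h K hKH ((fg_subgroupOf_iff hKH).1 hL)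
    exact ⟨.ofMulEquiv (subgroupOfEquivOfLe hKH).symm⟩

theorem FG.exists_le_of_le_sSup_of_directedOn {K : Subgroup G} (hK : K.FG)
    {c : Set (Subgroup G)} (hne : c.Nonempty) (hdir : DirectedOn (· ≤ ·) c)
    (hle : K ≤ sSup c) :
    ∃ H ∈ c, K ≤ H := by
  obtain ⟨S, rfl, hS⟩ := (fg_iff K).1 hK
  have hSc : S ⊆ ⋃ H ∈ c, (H : Set G) := fun x hx =>
    let ⟨H, hH, hxH⟩ := (mem_sSup_of_directedOn hne hdir).1 (hle (subset_closure hx))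
    Set.mem_biUnion hH hxH
  obtain ⟨H, hH, hSH⟩ := hdir.exists_mem_subset_of_finset_subset_biUnion (f := SetLike.coe) hne
    (s := hS.toFinset) (by simpa using hSc)
  exact ⟨H, hH, (closure_le H).2 (by simpa using hSH)⟩

theorem isLocallyFree_sSup_of_directedOn {c : Set (Subgroup G)} (hne : c.Nonempty)
    (hdir : DirectedOn (· ≤ ·) c) (hc : ∀ H ∈ c, IsLocallyFree H) :
    IsLocallyFree ↥(sSup c) := by
  refine isLocallyFree_iff.2 fun K hKc hK => ?_
  obtain ⟨H, hH, hKH⟩ := hK.exists_le_of_le_sSup_of_directedOn hne hdir hKc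
  exact isLocallyFree_iff.1 (hc H hH) K hKH hK

theorem exists_maximal_isLocallyFree :
    ∃ Γ : Subgroup G, Maximal (fun H : Subgroup G => IsLocallyFree H) Γ := by
  obtain ⟨Γ, -, hΓ⟩ := zorn_le_nonempty₀ {H : Subgroup G | IsLocallyFree H}
    (fun c hc hchain H hH => ⟨sSup c,
      isLocallyFree_sSup_of_directedOn ⟨H, hH⟩ hchain.directedOn hc, fun _ => le_sSup⟩)
    ⊥ .of_subsingleton
  exact ⟨Γ, hΓ⟩

end Subgroup

/-- If every subgroup of infinite index in `G` is locally free and no subgroup of finite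
index in `G` is locally free, then there is a subgroup `Γ` of infinite index such that
every subgroup strictly containing `Γ` has finite index. -/
theorem exists_maximal_infinite_index_subgroup {G : Type*} [Group G]
    (h₁ : ∀ H : Subgroup G, H.index = 0 → IsLocallyFree H)
    (h₂ : ∀ H : Subgroup G, H.index ≠ 0 → ¬ IsLocallyFree H) :
    ∃ Γ : Subgroup G, Γ.index = 0 ∧ ∀ Δ : Subgroup G, Γ < Δ → Δ.index ≠ 0 := by
  have index_eq_zero_iff (H : Subgroup G) : H.index = 0 ↔ IsLocallyFree H :=
    ⟨h₁ H, not_imp_not.1 (h₂ H)⟩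
  obtain ⟨Γ, hΓ⟩ := Subgroup.exists_maximal_isLocallyFree (G := G)
  refine ⟨Γ, (index_eq_zero_iff Γ).2 hΓ.prop, fun Δ hΓΔ hΔ => ?_⟩
  exact hΓ.not_gt ((index_eq_zero_iff Δ).1 hΔ) hΓΔ
end

section
/- Let G be a group such that every subgroup of infinite index in G is locally free and no subgroup of finite index in G is locally free. Then there exists a normal subgroup N ⊴ G of infinite index such that every normal subgroup of G strictly containing N has finite index in G. -/
theorem Subgroup.FG.map {G G' : Type*} [Group G] [Group G'] {H : Subgroup G} (hH : H.FG)
    (f : G →* G') : (H.map f).FG := by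
  classical
  obtain ⟨S, rfl⟩ := hH
  exact ⟨S.image f, by rw [Finset.coe_image, MonoidHom.map_closure]⟩

theorem Subgroup.FG.exists_le_of_le_sSup {G : Type*} [Group G] {c : Set (Subgroup G)}
    (hne : c.Nonempty) (hdir : DirectedOn (· ≤ ·) c) {H : Subgroup G} (hH : H.FG)
    (hle : H ≤ sSup c) : ∃ K ∈ c, H ≤ K := by
  obtain ⟨S, rfl⟩ := hH
  have hS : (S : Set G) ⊆ ⋃ K ∈ c, (K : Set G) := fun x hx => by
    simpa [Subgroup.mem_sSup_of_directedOn hne hdir] using hle (Subgroup.subset_closure hx)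
  obtain ⟨K, hKc, hSK⟩ := hdir.exists_mem_subset_of_finset_subset_biUnion hne hS
  exact ⟨K, hKc, (Subgroup.closure_le K).2 hSK⟩

namespace IsLocallyFree

theorem of_subsingleton_s3 (G : Type*) [Group G] [Subsingleton G] : IsLocallyFree G := by
  intro H _
  have : Unique H := ⟨⟨1⟩, fun _ => Subsingleton.elim _ _⟩
  exact ⟨IsFreeGroup.ofMulEquiv (MulEquiv.ofUnique (M := FreeGroup Empty) (N := H))⟩

theorem of_injective {H G : Type*} [Group H] [Group G] (hG : IsLocallyFree G) {f : H →* G}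
    (hf : Function.Injective f) : IsLocallyFree H := by
  intro K hK
  obtain ⟨_⟩ := hG (K.map f) (hK.map f)
  exact ⟨IsFreeGroup.ofMulEquiv (K.equivMapOfInjective f hf).symm⟩

theorem isFreeGroup {G : Type*} [Group G] [hfg : Group.FG G] (hG : IsLocallyFree G) :
    Nonempty (IsFreeGroup G) := by
  obtain ⟨_⟩ := hG ⊤ (Group.fg_def.1 hfg)
  exact ⟨IsFreeGroup.ofMulEquiv Subgroup.topEquiv⟩

theorem sSup_of_directedOn {G : Type*} [Group G] {c : Set (Subgroup G)} (hne : c.Nonempty)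
    (hdir : DirectedOn (· ≤ ·) c) (hc : ∀ K ∈ c, IsLocallyFree K) :
    IsLocallyFree (sSup c : Subgroup G) := by
  intro H hH
  obtain ⟨K, hKc, hle⟩ := (hH.map (sSup c).subtype).exists_le_of_le_sSup hne hdir
    (Subgroup.map_subtype_le H)
  have : Group.FG H := (Group.fg_iff_subgroup_fg H).2 hH
  let e := H.equivMapOfInjective _ (sSup c).subtype_injective
  exact ((hc K hKc).of_injective (f := (Subgroup.inclusion hle).comp e.toMonoidHom)
    ((Subgroup.inclusion_injective hle).comp e.injective)).isFreeGroup

end IsLocallyFree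

/-- If every subgroup of infinite index in `G` is locally free and no subgroup of finite
index in `G` is locally free, then there is a normal subgroup `N` of infinite index such
that every normal subgroup strictly containing `N` has finite index. -/
theorem exists_maximal_infinite_index_normal_subgroup {G : Type*} [Group G]
    (h₁ : ∀ H : Subgroup G, H.index = 0 → IsLocallyFree H)
    (h₂ : ∀ H : Subgroup G, H.index ≠ 0 → ¬ IsLocallyFree H) :
    ∃ N : Subgroup G, N.Normal ∧ N.index = 0 ∧
      ∀ Δ : Subgroup G, Δ.Normal → N < Δ → Δ.index ≠ 0 := by
  have hbot : (⊥ : Subgroup G).index = 0 := by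
    by_contra hfin
    exact h₂ ⊥ hfin (IsLocallyFree.of_subsingleton_s3 _)
  have hchain : ∀ c ⊆ {N : Subgroup G | N.Normal ∧ N.index = 0}, c.Nonempty →
      DirectedOn (· ≤ ·) c → (sSup c).Normal ∧ (sSup c).index = 0 := fun c hcS hne hdir => by
    refine ⟨Subgroup.sSup_normal c fun K hK => (hcS hK).1, ?_⟩
    by_contra hfin
    exact h₂ _ hfin (.sSup_of_directedOn hne hdir fun K hK => h₁ K (hcS hK).2)
  obtain ⟨N, -, hN⟩ := zorn_le_nonempty₀ {N : Subgroup G | N.Normal ∧ N.index = 0}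
    (fun c hcS hc K hK => ⟨sSup c, hchain c hcS ⟨K, hK⟩ hc.directedOn, fun _ => le_sSup⟩)
    ⊥ ⟨inferInstance, hbot⟩
  exact ⟨N, hN.prop.1, hN.prop.2, fun Δ hΔ hNΔ hΔi => hNΔ.not_ge (hN.2 ⟨hΔ, hΔi⟩ hNΔ.le)⟩
end

section
/- Let α be a cyclically ordered set and define ψ : α × α × α → ℤ by ψ(x,y,z) = 1 if y lies strictly between x and z in the cyclic order (sbtw x y z), ψ(x,y,z) = −1 if sbtw x z y, and ψ(x,y,z) = 0 if at least two of x, y, z are equal. Then for all x, y, z, w ∈ α one has ψ(y,z,w) − ψ(x,z,w) + ψ(x,y,w) − ψ(x,y,z) = 0. -/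
open scoped Classical in
/-- The orientation function of a cyclic order: `ψ x y z = 1` if `y` lies strictly
between `x` and `z`, `-1` if `z` lies strictly between `x` and `y`, and `0` if at
least two of the three points coincide. -/
noncomputable def cyclicPsi {α : Type*} [CircularOrder α] (x y z : α) : ℤ :=
  if sbtw x y z then 1 else if sbtw x z y then -1 else 0

section helpers

variable {α : Type*} [CircularOrder α]

private lemma not_sbtw_swap {a b c : α} (h : sbtw a b c) : ¬ sbtw a c b := fun h' =>
  sbtw_asymm h h'.cyclic_left

private lemma psi_pos {x y z : α} (h : sbtw x y z) : cyclicPsi x y z = 1 := by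
  simp [cyclicPsi, h]

private lemma psi_neg {x y z : α} (h : sbtw x z y) : cyclicPsi x y z = -1 := by
  simp [cyclicPsi, h, not_sbtw_swap h]

private lemma psi_aab (a b : α) : cyclicPsi a a b = 0 := by
  simp [cyclicPsi, sbtw_irrefl_left, sbtw_irrefl_right, sbtw_irrefl_left_right]

private lemma psi_aba (a b : α) : cyclicPsi a b a = 0 := by
  simp [cyclicPsi, sbtw_irrefl_left, sbtw_irrefl_left_right, sbtw_irrefl_right]

private lemma psi_abb (a b : α) : cyclicPsi a b b = 0 := by
  simp [cyclicPsi, sbtw_irrefl_left_right, sbtw_irrefl_right, sbtw_irrefl_left]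

private lemma psi_cyclic (x y z : α) : cyclicPsi x y z = cyclicPsi y z x := by
  unfold cyclicPsi
  by_cases h1 : sbtw x y z
  · simp [h1, h1.cyclic_left]
  · by_cases h2 : sbtw x z y
    · simp [h1, h2, psi_neg, not_sbtw_swap h2.cyclic_right, h2.cyclic_right]
    · have h3 : ¬ sbtw y z x := fun h => h1 h.cyclic_right
      have h4 : ¬ sbtw y x z := fun h => h2 h.cyclic_left
      simp [h1, h2, h3, h4]

private lemma psi_swap (x y z : α) : cyclicPsi x z y = -cyclicPsi x y z := by
  unfold cyclicPsi
  by_cases h1 : sbtw x y z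
  · simp [h1, not_sbtw_swap h1]
  · by_cases h2 : sbtw x z y
    · simp [h1, h2]
    · simp [h1, h2]

/-- totality of `sbtw` for pairwise distinct points -/
private lemma sbtw_total {x a b : α} (hxa : x ≠ a) (hxb : x ≠ b) (hab : a ≠ b) :
    sbtw x a b ∨ sbtw x b a := by
  rcases btw_total x a b with h | h
  · left
    refine h.sbtw_of_not_btw fun h' => ?_
    rcases btw_antisymm h h' with h | h | h
    · exact hxa h
    · exact hab h
    · exact hxb h.symm
  · right
    have h1 : btw x b a := (h.cyclic_left).cyclic_left
    refine h1.sbtw_of_not_btw fun h' => ?_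
    rcases btw_antisymm h1 h' with h | h | h
    · exact hxb h
    · exact hab h.symm
    · exact hxa h.symm

/-- key: from `sbtw x a b` and `sbtw x b c` deduce `sbtw x a c` and `sbtw a b c`. -/
private lemma key {x a b c : α} (h1 : sbtw x a b) (h2 : sbtw x b c) :
    sbtw x a c ∧ sbtw a b c := by
  refine ⟨h1.trans_right h2, ?_⟩
  have := (h2.cyclic_right).trans_left h1
  exact this.cyclic_left

end helpers

/-- The coboundary identity for the orientation function of a cyclic order. -/
theorem cyclicPsi_cocycle {α : Type*} [CircularOrder α] (x y z w : α) :
    cyclicPsi y z w - cyclicPsi x z w + cyclicPsi x y w - cyclicPsi x y z = 0 := by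
  by_cases hxy : x = y
  · subst hxy; rw [psi_aab x w, psi_aab x z]; ring
  by_cases hxz : x = z
  · subst hxz; rw [psi_aab x w, psi_aba x y, psi_cyclic y x w, psi_swap x y w]; ring
  by_cases hxw : x = w
  · subst hxw; rw [psi_aba x z, psi_aba x y, psi_cyclic x y z]; ring
  by_cases hyz : y = z
  · subst hyz; rw [psi_aab y w, psi_abb x y]; ring
  by_cases hyw : y = w
  · subst hyw; rw [psi_aba y z, psi_abb x y, psi_swap x y z]; ring
  by_cases hzw : z = w
  · subst hzw; rw [psi_abb y z, psi_abb x z]; ring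
  rcases sbtw_total hxy hxz hyz with A | A <;>
    rcases sbtw_total hxy hxw hyw with B | B <;>
      rcases sbtw_total hxz hxw hzw with C | C
  · -- order x y z w
    have h := key A C
    rw [psi_pos h.2, psi_pos C, psi_pos B, psi_pos A]; ring
  · -- order x y w z
    have h := key B C
    rw [psi_neg h.2, psi_neg C, psi_pos B, psi_pos A]; ring
  · -- contradiction
    exact absurd (key A C).1 (not_sbtw_swap B)
  · -- order x w y z
    have h := key B A
    rw [psi_pos h.2.cyclic_left, psi_neg C, psi_neg B, psi_pos A]; ring
  · -- order x z y w
    have h := key A B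
    rw [psi_neg h.2.cyclic_left, psi_pos C, psi_pos B, psi_neg A]; ring
  · -- contradiction
    exact absurd (key A B).1 (not_sbtw_swap C)
  · -- order x z w y
    have h := key C B
    rw [psi_pos h.2.cyclic_right, psi_pos C, psi_neg B, psi_neg A]; ring
  · -- order x w z y
    have h := key C A
    rw [psi_neg h.2.cyclic_right, psi_neg C, psi_neg B, psi_neg A]; ring
end

section
/- Let G be a group, C ≥ 0 a real number, and f : G → ℝ a function satisfying: (i) |f(xy) − f(x) − f(y)| ≤ C for all x, y ∈ G; (ii) f(xⁿ) = n·f(x) for all x ∈ G and all integers n; (iii) f(xyx⁻¹) = f(y) for all x, y ∈ G. Suppose z ∈ G, n ≥ 1, g ≥ 1, and zⁿ is a product of g commutators, i.e. zⁿ = ∏_{i=1}^g [x_i, y_i] for some x_i, y_i ∈ G. Then n·|f(z)| ≤ 4·C·g. -/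
/-!
A class function `f` with `f a⁻¹ = -f a` has `|f ⁅a, b⁆| ≤ C`, and each multiplication costs
at most one more defect `C`, so `|f (zⁿ)| ≤ 2Cg`; homogeneity gives `f (zⁿ) = n f z`.
-/

open scoped commutatorElement

section Quasimorphism

variable {G : Type*} [Group G] {f : G → ℝ} {C : ℝ}

theorem abs_apply_mul_le_of_defect (hqm : ∀ x y : G, |f (x * y) - f x - f y| ≤ C) (x y : G) :
    |f (x * y)| ≤ |f x| + |f y| + C := by
  have := hqm x y
  have := abs_sub_abs_le_abs_sub (f (x * y) - f x) (f y)
  have := abs_sub_abs_le_abs_sub (f (x * y)) (f x)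
  linarith

theorem abs_apply_list_prod_le_of_defect (hqm : ∀ x y : G, |f (x * y) - f x - f y| ≤ C)
    (hone : f 1 = 0) {D : ℝ} (l : List G) (hl : ∀ a ∈ l, |f a| ≤ D) :
    |f l.prod| ≤ l.length * (D + C) := by
  induction l with
  | nil => simp [hone]
  | cons a l ih =>
    have ha : |f a| ≤ D := hl a List.mem_cons_self
    have hl' : |f l.prod| ≤ l.length * (D + C) := ih fun b hb => hl b (List.mem_cons_of_mem a hb)
    calc |f (a :: l).prod| ≤ |f a| + |f l.prod| + C := abs_apply_mul_le_of_defect hqm a l.prod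
      _ ≤ D + l.length * (D + C) + C := by gcongr
      _ = (a :: l).length * (D + C) := by rw [List.length_cons]; push_cast; ring

/-- The defect inequality at `(a b a⁻¹, b⁻¹)` reads `|f ⁅a, b⁆ - f b + f b| ≤ C`. -/
theorem abs_apply_commutatorElement_le_of_defect
    (hqm : ∀ x y : G, |f (x * y) - f x - f y| ≤ C)
    (hinv : ∀ a : G, f a⁻¹ = -f a) (hclass : ∀ x y : G, f (x * y * x⁻¹) = f y) (a b : G) :
    |f ⁅a, b⁆| ≤ C := by
  simpa [commutatorElement_def, hclass, hinv] using hqm (a * b * a⁻¹) b⁻¹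

end Quasimorphism

theorem quasimorphism_genus_bound_general {G : Type*} [Group G] (C : ℝ) (hC : 0 ≤ C)
    (f : G → ℝ)
    (hqm : ∀ x y : G, |f (x * y) - f x - f y| ≤ C)
    (hhom : ∀ (x : G) (n : ℤ), f (x ^ n) = n * f x)
    (hclass : ∀ x y : G, f (x * y * x⁻¹) = f y)
    (z : G) (n g : ℕ)
    (x y : Fin g → G)
    (hz : z ^ n = (List.ofFn fun i : Fin g => ⁅x i, y i⁆).prod) :
    (n : ℝ) * |f z| ≤ 4 * C * g := by
  have hone : f 1 = 0 := by simpa using hhom 1 0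
  have hinv (a : G) : f a⁻¹ = -f a := by simpa using hhom a (-1)
  have hpow : f (z ^ n) = n * f z := by exact_mod_cast hhom z n
  have hprod := abs_apply_list_prod_le_of_defect hqm hone (D := C)
    (List.ofFn fun i : Fin g => ⁅x i, y i⁆) (by
      intro a ha
      obtain ⟨i, rfl⟩ := List.mem_ofFn.mp ha
      exact abs_apply_commutatorElement_le_of_defect hqm hinv hclass (x i) (y i))
  rw [← hz, hpow, abs_mul, Nat.abs_cast, List.length_ofFn] at hprod
  nlinarith [(Nat.cast_nonneg g : (0 : ℝ) ≤ g)]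

/-- If `f : G → ℝ` is a homogeneous quasimorphism with defect at most `C` which is a
class function, and `zⁿ` is a product of `g` commutators, then `n⬝|f z| ≤ 4⬝C⬝g`. -/
theorem quasimorphism_genus_bound {G : Type*} [Group G] (C : ℝ) (hC : 0 ≤ C)
    (f : G → ℝ)
    (hqm : ∀ x y : G, |f (x * y) - f x - f y| ≤ C)
    (hhom : ∀ (x : G) (n : ℤ), f (x ^ n) = n * f x)
    (hclass : ∀ x y : G, f (x * y * x⁻¹) = f y)
    (z : G) (n g : ℕ) (hn : 1 ≤ n) (hg : 1 ≤ g)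
    (x y : Fin g → G)
    (hz : z ^ n = (List.ofFn fun i : Fin g => ⁅x i, y i⁆).prod) :
    (n : ℝ) * |f z| ≤ 4 * C * g :=
  quasimorphism_genus_bound_general C hC f hqm hhom hclass z n g x y hz
end

section
/- (Culler) Let F be a finitely generated free group and let z be a nontrivial element of the commutator subgroup [F, F]. Then there exists a constant c > 0 such that for every integer n ≥ 1 and every g ≥ 1, if zⁿ can be written as a product of g commutators, zⁿ = ∏_{i=1}^g [x_i, y_i] with x_i, y_i ∈ F, then g ≥ c·n. -/
/-!
Brooks' counting quasimorphism `φ_w` (occurrences of `w` minus occurrences of `w⁻¹` in reduced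
words) has defect at most `6|w|`, because the reduced words of `x`, `y` and `xy` form a tripod
`x = ac`, `y = c⁻¹b`, `xy = ab`. An antisymmetric quasimorphism of defect `D` is bounded by `3D` on
commutators, hence by `4Dg` on products of `g` commutators.

Take `w` to be the cyclic reduction of `z`, so that the reduced word of `zⁿ` is `C wⁿ C⁻¹`. The
word `w⁻¹` never occurs in `wⁿ`: an infix of `wⁿ` of length `|w|` is a rotation `BA` of `w = AB`,
and `BA = B⁻¹A⁻¹` would make the reduced words `A` and `B` self-inverse, hence trivial in the
torsion-free free group. So `φ_w(zⁿ) ≥ n - K`, and `n - K ≤ 4Dg`.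
-/

open scoped commutatorElement

namespace List

variable {α : Type*}

theorem IsInfix.exists_eq_append_of_flatten_replicate {m w : List α} {n : ℕ}
    (h : m <:+: (replicate n w).flatten) (hm : m.length = w.length) :
    ∃ A B, w = A ++ B ∧ m = B ++ A := by
  obtain ⟨s, t, hst⟩ := h
  induction n generalizing s with
  | zero =>
    obtain ⟨-, rfl, -⟩ : s = [] ∧ m = [] ∧ t = [] := by simpa using hst
    exact ⟨[], [], by simpa [eq_comm] using hm, rfl⟩
  | succ n ih =>
    rw [replicate_succ, flatten_cons, append_assoc, append_eq_append_iff] at hst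
    obtain ⟨a, rfl, hmt⟩ | ⟨c, rfl, hc⟩ := hst
    · refine ⟨s, a, rfl, ?_⟩
      rw [length_append] at hm
      cases n with
      | zero =>
        rw [replicate_zero, flatten_nil, append_nil] at hmt
        have := congrArg length hmt
        rw [length_append] at this
        obtain rfl : s = [] := eq_nil_of_length_eq_zero (by omega)
        simpa using (append_inj (hmt.trans (append_nil a).symm) (by simpa using hm)).1
      | succ n =>
        rw [replicate_succ, flatten_cons, append_assoc, ← append_assoc a] at hmt
        exact (append_inj hmt (by simp [hm, add_comm])).1
    · exact ih c (by rw [hc, append_assoc])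

variable [DecidableEq α]

def countInfix (w : List α) : List α → ℕ
  | [] => 0
  | a :: l => countInfix w l + if w <+: a :: l then 1 else 0

variable (w : List α)

theorem countInfix_add_le_countInfix_append :
    ∀ u v : List α, countInfix w u + countInfix w v ≤ countInfix w (u ++ v)
  | [], _ => by simp [countInfix]
  | a :: u, v => by
    have hprefix : w <+: a :: u → w <+: a :: (u ++ v) := fun h =>
      h.trans (prefix_append (a :: u) v)
    have := countInfix_add_le_countInfix_append u v
    simp only [countInfix, cons_append]
    split_ifs <;> grind

theorem countInfix_append_le_length_add : ∀ u v : List α,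
    countInfix w (u ++ v) ≤ u.length + countInfix w v
  | [], _ => by simp
  | a :: u, v => by
    have := countInfix_append_le_length_add u v
    simp only [countInfix, cons_append, length_cons]
    split_ifs <;> omega

theorem countInfix_append_le : ∀ u v : List α,
    countInfix w (u ++ v) ≤ countInfix w u + countInfix w v + w.length
  | [], _ => by simp [countInfix]
  | a :: u, v => by
    by_cases hlen : w.length ≤ (a :: u).length
    · have hprefix : w <+: a :: (u ++ v) → w <+: a :: u := fun h =>
        prefix_of_prefix_length_le h (prefix_append (a :: u) v) hlen
      have := countInfix_append_le u v
      simp only [countInfix, cons_append]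
      split_ifs <;> grind
    · have := countInfix_append_le_length_add w (a :: u) v
      omega

theorem abs_countInfix_append_sub_le (u v : List α) :
    |(countInfix w (u ++ v) : ℤ) - countInfix w u - countInfix w v| ≤ w.length := by
  have := countInfix_add_le_countInfix_append w u v
  have := countInfix_append_le w u v
  rw [abs_le]
  constructor <;> omega

theorem countInfix_eq_zero {l : List α} (h : ¬ w <:+: l) : countInfix w l = 0 := by
  induction l with
  | nil => rfl
  | cons a l ih =>
    rw [countInfix, ih (fun h' => h (h'.trans (suffix_cons a l).isInfix)),
      if_neg (fun h' => h h'.isInfix)]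

theorem le_countInfix_flatten_replicate (hw : w ≠ []) (n : ℕ) :
    n ≤ countInfix w (replicate n w).flatten := by
  induction n with
  | zero => exact Nat.zero_le _
  | succ n ih =>
    have hself : 1 ≤ countInfix w w := by
      obtain ⟨a, l, rfl⟩ := exists_cons_of_ne_nil hw
      simp [countInfix]
    have := countInfix_add_le_countInfix_append w w (replicate n w).flatten
    rw [replicate_succ, flatten_cons]
    omega

end List

def IsQuasimorphism {G : Type*} [Group G] (D : ℤ) (φ : G → ℤ) : Prop :=
  ∀ x y, |φ (x * y) - φ x - φ y| ≤ D

namespace IsQuasimorphism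

variable {G H : Type*} [Group G] [Group H] {D : ℤ} {φ : G → ℤ}

theorem comp (hφ : IsQuasimorphism D φ) (f : H →* G) : IsQuasimorphism D (φ ∘ f) :=
  fun x y => by simpa using hφ (f x) (f y)

theorem abs_commutatorElement_le (hφ : IsQuasimorphism D φ) (hinv : ∀ x, φ x⁻¹ = -φ x)
    (x y : G) : |φ ⁅x, y⁆| ≤ 3 * D := by
  have hcomm : ⁅x, y⁆ = x * y * (y * x)⁻¹ := by group
  have h₁ := hφ (x * y) (y * x)⁻¹
  have h₂ := hφ x y
  have h₃ := hφ y x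
  rw [hinv] at h₁
  rw [hcomm]
  rw [abs_le] at h₁ h₂ h₃ ⊢
  constructor <;> linarith

theorem abs_list_prod_le (hφ : IsQuasimorphism D φ) (hinv : ∀ x, φ x⁻¹ = -φ x) {B : ℤ} :
    ∀ l : List G, (∀ g ∈ l, |φ g| ≤ B) → |φ l.prod| ≤ (B + D) * l.length
  | [], _ => by
    have h₁ := hinv 1
    rw [inv_one] at h₁
    simp only [List.prod_nil, List.length_nil, Nat.cast_zero, mul_zero, abs_nonpos_iff]
    linarith
  | g :: l, hl => by
    have ih := abs_list_prod_le hφ hinv l fun x hx => hl x (List.mem_cons_of_mem g hx)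
    have hg := hl g List.mem_cons_self
    have hmul := hφ g l.prod
    rw [List.prod_cons, List.length_cons, Nat.cast_succ]
    rw [abs_le] at ih hg hmul ⊢
    constructor <;> linarith

theorem natCast_le_of_pow_eq_prod_commutatorElement (hφ : IsQuasimorphism D φ)
    (hinv : ∀ x, φ x⁻¹ = -φ x) {z : G} {K : ℤ}
    (hpow : ∀ n : ℕ, (n : ℤ) ≤ φ (z ^ n) + K) (hK : 0 ≤ K) {n g : ℕ} (x y : Fin g → G)
    (hg : 1 ≤ g) (hprod : z ^ n = (List.ofFn fun i => ⁅x i, y i⁆).prod) :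
    (n : ℤ) ≤ (K + 4 * D) * g := by
  have hbound := abs_list_prod_le hφ hinv (B := 3 * D) (List.ofFn fun i => ⁅x i, y i⁆)
    (by simpa using fun i => abs_commutatorElement_le hφ hinv (x i) (y i))
  rw [← hprod, List.length_ofFn] at hbound
  have hKg : K ≤ K * g := le_mul_of_one_le_right hK (by exact_mod_cast hg)
  have := hpow n
  rw [abs_le] at hbound
  linarith

end IsQuasimorphism

theorem List.IsInfix.invRev {α : Type*} {L₁ L₂ : List (α × Bool)} (h : L₁ <:+: L₂) :
    FreeGroup.invRev L₁ <:+: FreeGroup.invRev L₂ :=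
  (h.map _).reverse

namespace FreeGroup

open List

variable {α : Type*} [DecidableEq α]

theorem IsReduced.eq_nil_of_invRev_eq {L : List (α × Bool)} (hL : IsReduced L)
    (h : invRev L = L) : L = [] := by
  have hsq : mk L ^ 2 = 1 := by rw [sq]; nth_rw 1 [← h, ← inv_mk, inv_mul_cancel]
  rw [← hL.reduce_eq, ← toWord_mk, sq_eq_one.1 hsq, toWord_one]

theorem IsReduced.not_invRev_infix_flatten_replicate {L : List (α × Bool)} (hL : IsReduced L)
    (hne : L ≠ []) (n : ℕ) : ¬ invRev L <:+: (replicate n L).flatten := by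
  intro h
  obtain ⟨A, B, rfl, hAB⟩ := h.exists_eq_append_of_flatten_replicate invRev_length
  rw [invRev_append] at hAB
  obtain ⟨hB, hA⟩ := append_inj hAB invRev_length
  rw [(hL.infix (prefix_append A B).isInfix).eq_nil_of_invRev_eq hA,
    (hL.infix (suffix_append A B).isInfix).eq_nil_of_invRev_eq hB] at hne
  exact hne rfl

theorem IsReduced.exists_reduce_append {u v : List (α × Bool)} (hu : IsReduced u)
    (hv : IsReduced v) : ∃ a b c, u = a ++ c ∧ v = invRev c ++ b ∧ reduce (u ++ v) = a ++ b := by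
  induction u using List.reverseRecOn generalizing v with
  | nil => exact ⟨[], v, [], rfl, rfl, hv.reduce_eq⟩
  | append_singleton u p ih =>
    cases v with
    | nil => exact ⟨u ++ [p], [], [], by simp, rfl, by simpa using hu.reduce_eq⟩
    | cons q v =>
      by_cases hpq : p.1 = q.1 → p.2 = q.2
      · refine ⟨u ++ [p], q :: v, [], by simp, rfl, IsReduced.reduce_eq ?_⟩
        exact hu.append_overlap (isReduced_cons_cons.2 ⟨hpq, hv⟩) (cons_ne_nil p [])
      · obtain ⟨a, b, c, rfl, rfl, hab⟩ :=
          ih (hu.infix (prefix_append _ _).isInfix) (hv.infix (suffix_cons q v).isInfix)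
        obtain ⟨h₁, h₂⟩ := Classical.not_imp.1 hpq
        have hq : q = (p.1, !p.2) := Prod.ext h₁.symm (Bool.eq_not_iff.2 (Ne.symm h₂))
        refine ⟨a, b, c ++ [p], by simp, by simp [hq, invRev], ?_⟩
        rw [← hab, hq]
        simpa using reduce.Step.eq (Red.Step.not (L₁ := a ++ c) (x := p.1) (b := p.2))

theorem exists_toWord_mul (x y : FreeGroup α) : ∃ a b c, x.toWord = a ++ c ∧
    y.toWord = invRev c ++ b ∧ (x * y).toWord = a ++ b := by
  rw [toWord_mul]
  exact isReduced_toWord.exists_reduce_append isReduced_toWord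

/-- Counting `w` in the word of `x⁻¹`, rather than `w⁻¹` in the word of `x`, makes
`brooks_inv` definitional. -/
def brooks (w : List (α × Bool)) (x : FreeGroup α) : ℤ :=
  countInfix w x.toWord - countInfix w x⁻¹.toWord

theorem brooks_inv (w : List (α × Bool)) (x : FreeGroup α) : brooks w x⁻¹ = -brooks w x := by
  rw [brooks, brooks, inv_inv, neg_sub]

theorem isQuasimorphism_brooks (w : List (α × Bool)) :
    IsQuasimorphism (6 * w.length) (brooks w) := by
  intro x y
  obtain ⟨a, b, c, hx, hy, hxy⟩ := exists_toWord_mul x y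
  simp only [brooks, toWord_inv, hx, hy, hxy, invRev_append, invRev_invRev]
  have := abs_countInfix_append_sub_le w a b
  have := abs_countInfix_append_sub_le w a c
  have := abs_countInfix_append_sub_le w (invRev c) b
  have := abs_countInfix_append_sub_le w (invRev b) (invRev a)
  have := abs_countInfix_append_sub_le w (invRev c) (invRev a)
  have := abs_countInfix_append_sub_le w (invRev b) c
  simp only [abs_le] at *
  constructor <;> linarith

theorem reduceCyclically_toWord_ne_nil {z : FreeGroup α} (hz : z ≠ 1) :
    reduceCyclically z.toWord ≠ [] := by
  intro h
  have hz' := reduceCyclically.conj_conjugator_reduceCyclically z.toWord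
  rw [h, append_nil] at hz'
  apply hz
  rw [← mk_toWord (x := z), ← hz', ← mul_mk, ← inv_mk, mul_inv_cancel]

theorem exists_natCast_le_brooks_pow {z : FreeGroup α} (hz : z ≠ 1) :
    ∃ K : ℕ, ∀ n : ℕ, (n : ℤ) ≤ brooks (reduceCyclically z.toWord) (z ^ n) + K := by
  have hw := reduceCyclically_toWord_ne_nil hz
  set w := reduceCyclically z.toWord
  set C := reduceCyclically.conjugator z.toWord
  refine ⟨countInfix w C + countInfix w (invRev C) + 2 * w.length, fun n => ?_⟩
  rcases Nat.eq_zero_or_pos n with rfl | hn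
  · simp only [Nat.cast_zero, pow_zero, brooks, inv_one, toWord_one, sub_self, zero_add]
    positivity
  have hword : (z ^ n).toWord = C ++ (replicate n w).flatten ++ invRev C := by
    rw [toWord_pow, reduceCyclically.reduce_flatten_replicate isReduced_toWord, if_neg hn.ne']
  have hcyc := reduceCyclically.isCyclicallyReduced (isReduced_toWord (x := z))
  have hinvRev : countInfix w (invRev (replicate n w).flatten) = 0 :=
    countInfix_eq_zero w fun h => hcyc.isReduced.not_invRev_infix_flatten_replicate hw n
      (by simpa using h.invRev)
  simp only [brooks, toWord_inv, hword, invRev_append, invRev_invRev, append_assoc]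
  have := countInfix_add_le_countInfix_append w C ((replicate n w).flatten ++ invRev C)
  have := countInfix_add_le_countInfix_append w (replicate n w).flatten (invRev C)
  have := le_countInfix_flatten_replicate w hw n
  have := countInfix_append_le w C (invRev (replicate n w).flatten ++ invRev C)
  have := countInfix_append_le w (invRev (replicate n w).flatten) (invRev C)
  omega

end FreeGroup

theorem culler_genus_norm_linear_general {F : Type*} [Group F] [IsFreeGroup F]
    (z : F) (hz1 : z ≠ 1) :
    ∃ c : ℝ, 0 < c ∧ ∀ (n g : ℕ) (x y : Fin g → F), 1 ≤ n → 1 ≤ g →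
      z ^ n = (List.ofFn fun i : Fin g => ⁅x i, y i⁆).prod →
      c * n ≤ (g : ℝ) := by
  classical
  obtain ⟨ι, ⟨b⟩⟩ := IsFreeGroup.nonempty_basis (G := F)
  set w := FreeGroup.reduceCyclically (b.repr z).toWord
  obtain ⟨K, hK⟩ :=
    FreeGroup.exists_natCast_le_brooks_pow ((map_ne_one_iff b.repr b.repr.injective).2 hz1)
  have hφ := (FreeGroup.isQuasimorphism_brooks w).comp b.repr.toMonoidHom
  refine ⟨1 / (K + 4 * (6 * w.length) + 1), by positivity, fun n g x y _ hg hprod => ?_⟩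
  have hn := hφ.natCast_le_of_pow_eq_prod_commutatorElement
    (fun x => by simp [FreeGroup.brooks_inv]) (fun n => by simpa using hK n) (by positivity)
    x y hg hprod
  have hn' : (n : ℝ) ≤ (K + 4 * (6 * w.length)) * g := by exact_mod_cast hn
  rw [div_mul_eq_mul_div, one_mul, div_le_iff₀ (by positivity)]
  linarith [(Nat.cast_nonneg g : (0 : ℝ) ≤ g)]

/-- (Culler) For a nontrivial element `z` of the commutator subgroup of a finitely
generated free group `F`, there is `c > 0` such that whenever `zⁿ` (with `n ≥ 1`) is a
product of `g ≥ 1` commutators, `g ≥ c⬝n`: the genus norm of `zⁿ` grows linearly. -/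
theorem culler_genus_norm_linear {F : Type*} [Group F] [IsFreeGroup F]
    (hFG : Group.FG F) (z : F) (hz : z ∈ commutator F) (hz1 : z ≠ 1) :
    ∃ c : ℝ, 0 < c ∧ ∀ (n g : ℕ) (x y : Fin g → F), 1 ≤ n → 1 ≤ g →
      z ^ n = (List.ofFn fun i : Fin g => ⁅x i, y i⁆).prod →
      c * n ≤ (g : ℝ) :=
  culler_genus_norm_linear_general z hz1
end
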